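/- Let κ ≥ 2. Over the alphabet Σ = V ∪ {x_0, …, x_n} ∪ {y_0, …, y_m} ∪ {z} (new separator letters) define the target T = z x_0 (∏_{i=1}^n v_i^{κ−1} x_i) z y_0 (∏_{j=1}^m e_j y_j), where v_i^{κ−1} denotes κ−1 consecutive copies of the letter v_i. Take pairwise distinct blocks Z, Z′; X_{i,j} and X′_{i,j} for every ordered pair (i, j) with 1 ≤ i, j ≤ κ and i ≠ j; and A_0, A_1, …, A_κ, B_0, and B_{i,j} for 1 ≤ i < j ≤ κ. Define the patterns 𝒳 = Z A_0 ∏_{i=1}^κ [ (∏_{j≠i, j increasing} X_{i,j}) A_i ] Z′ B_0 ∏_{1 ≤ i < j ≤ κ} [ X′_{i,j} X′_{j,i} B_{i,j} ] and 𝒳′ = Z′ A_0 ∏_{i=1}^κ [ (∏_{j≠i, j increasing} X′_{i,j}) A_i ] Z B_0 ∏_{1 ≤ i < j ≤ κ} [ X_{i,j} X_{j,i} B_{i,j} ], the products over pairs (i, j) taken in lexicographic order; note each pattern is duplicate-free and both equations share the same target T. Then the system {T ≡ 𝒳, T ≡ 𝒳′} is satisfied by some assignment if and only if G contains a clique of size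 κ. (Correctness of the reduction in Theorem 4.2.) -/

import Mathlib

/-!
In both equations the blocks `Z` and `Z'` must start at the two occurrences of the letter `z`
in `T`, so each half of a pattern spells out the corresponding half of `T`. Every unprimed block
`X_{i,j}` therefore lies in the `x`-half (through `𝒳`) and in the `y`-half (through `𝒳'`), so it
consists of vertex letters only. In the `x`-half, the separator-free word `∏_{j ≠ i} X_{i,j}` of
length at least `κ - 1` must be a whole run `v_c^{κ-1}`, so every `X_{i,j}` is the single letter
`v_{c_i}`; in the `y`-half, `X_{i,j} X_{j,i} = v_{c_i} v_{c_j}` must be a whole run, i.e. an edge.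

Conversely, for a clique `u_1 < ⋯ < u_κ` put `X_{i,j} = X'_{i,j} = v_{u_i}` and let the gap blocks
`A_i`, `B_{i,j}` absorb the text between consecutive chosen runs; each such gap is nonempty as it
starts with a separator. Since the edge list is sorted, the runs of the clique edges occur in `T`
in the lexicographic order of the pairs `(i, j)`, as the pattern requires.
-/

namespace Stmt6

/-- The pairs `(i, j)` with `i < j`, listed in lexicographic order. -/
def pairs (κ : ℕ) : List (Fin κ × Fin κ) :=
  (List.finRange κ).flatMap fun i =>
    ((List.finRange κ).filter fun j => decide (i < j)).map fun j => (i, j)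

/-- The alphabet `Σ = V ∪ {x₀,…,x_n} ∪ {y₀,…,y_m} ∪ {z}`. -/
abbrev Letter (n m : ℕ) := Fin n ⊕ (Fin (n + 1) ⊕ (Fin (m + 1) ⊕ Unit))

def vtx {n m : ℕ} (i : Fin n) : Letter n m := Sum.inl i
def xSep {n m : ℕ} (i : Fin (n + 1)) : Letter n m := Sum.inr (Sum.inl i)
def ySep {n m : ℕ} (j : Fin (m + 1)) : Letter n m := Sum.inr (Sum.inr (Sum.inl j))
def zSep {n m : ℕ} : Letter n m := Sum.inr (Sum.inr (Sum.inr ()))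

/-- The blocks: the starting blocks `Z` and `Z'` (`Z b` with `b` the primedness),
the coding blocks `X_{i,j}` and `X'_{i,j}` (`X b i j`, used for `i ≠ j`), and the
gap blocks `A₀,…,A_κ`, `B₀` and `B_{i,j}` (used for `i < j`). -/
inductive Blk (κ : ℕ) where
  | Z (primed : Bool)
  | X (primed : Bool) (i j : Fin κ)
  | A (i : Fin (κ + 1))
  | B0
  | B (i j : Fin κ)

/-- The common target string
`T = z x₀ (∏_{i=1}^n vᵢ^{κ-1} xᵢ) z y₀ (∏_{j=1}^m e_j y_j)`. -/
def target (n m κ : ℕ) (edges : Fin m → Fin n × Fin n) : List (Letter n m) :=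
  [zSep, xSep 0] ++
  ((List.finRange n).flatMap fun i =>
    List.replicate (κ - 1) (vtx i) ++ [xSep i.succ]) ++
  [zSep, ySep 0] ++
  ((List.finRange m).flatMap fun j =>
    [vtx (edges j).1, vtx (edges j).2, ySep j.succ])

/-- The pattern
`Z A₀ ∏_{i=1}^κ [(∏_{j≠i} X_{i,j}) A_i] Z' B₀ ∏_{i<j} [X'_{i,j} X'_{j,i} B_{i,j}]`;
`pattern false` is `𝒳` and `pattern true` is `𝒳'` (with the roles of the primed and
unprimed blocks exchanged). -/
def pattern (κ : ℕ) (b : Bool) : List (Blk κ) :=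
  [Blk.Z b, Blk.A 0] ++
  ((List.finRange κ).flatMap fun i =>
    (((List.finRange κ).filter fun j => decide (j ≠ i)).map fun j => Blk.X b i j) ++
      [Blk.A i.succ]) ++
  [Blk.Z (!b), Blk.B0] ++
  ((pairs κ).flatMap fun p =>
    [Blk.X (!b) p.1 p.2, Blk.X (!b) p.2 p.1, Blk.B p.1 p.2])

end Stmt6

namespace List

variable {α ι : Type*}

theorem eq_and_eq_of_append_cons_eq_append_cons {a : α} {u v f s : List α}
    (hf : a ∉ f) (hs : a ∉ s) (h : u ++ a :: v = f ++ a :: s) : u = f ∧ v = s := by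
  rcases append_eq_append_iff.1 h with ⟨_ | ⟨b, c⟩, rfl, hc⟩ | ⟨_ | ⟨b, c⟩, rfl, hc⟩
  · simp_all
  · simp only [cons_append, cons.injEq] at hc
    exact absurd (by simp [← hc.1]) hf
  · simp_all
  · simp only [cons_append, cons.injEq] at hc
    exact absurd (by simp [hc.2, hc.1]) hs

theorem IsInfix.infix_or_infix_of_not_mem {g a b : List α} {x : α} (h : g <:+: a ++ x :: b)
    (hx : x ∉ g) : g <:+: a ∨ g <:+: b := by
  obtain ⟨u, w, h⟩ := h
  rw [append_assoc] at h
  rcases append_eq_append_iff.1 h with ⟨c, rfl, hc⟩ | ⟨_ | ⟨y, c⟩, rfl, hc⟩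
  · rcases append_eq_append_iff.1 hc with ⟨d, rfl, -⟩ | ⟨_ | ⟨y, d⟩, rfl, hd⟩
    · exact Or.inl ⟨u, d, by simp⟩
    · exact Or.inl ⟨u, [], by simp⟩
    · simp only [cons_append, cons.injEq] at hd
      exact absurd (by simp [hd.1]) hx
  · cases g with
    | nil => exact Or.inl nil_infix
    | cons y g =>
      simp only [nil_append, cons_append, cons.injEq] at hc
      exact absurd (by simp [hc.1]) hx
  · simp only [cons_append, cons.injEq] at hc
    exact Or.inr ⟨c, w, by simp [hc.2]⟩

theorem exists_eq_of_infix_flatMap {p : α → Prop} {f : ι → List α} {s : ι → α} {r : ℕ}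
    (hf : ∀ i, (f i).length = r) (hs : ∀ i, ¬ p (s i)) {g : List α} (hg : ∀ x ∈ g, p x)
    (hr : 0 < r) (hlen : r ≤ g.length) :
    ∀ {L : List ι}, g <:+: L.flatMap (fun i => f i ++ [s i]) → ∃ i, g = f i
  | [], h => by
    rw [flatMap_nil, infix_nil] at h
    simp only [h, length_nil, nonpos_iff_eq_zero] at hlen
    omega
  | i :: L, h => by
    rw [flatMap_cons, append_assoc, singleton_append] at h
    rcases h.infix_or_infix_of_not_mem (fun hi => hs i (hg _ hi)) with h | h
    · exact ⟨i, h.eq_of_length (le_antisymm h.length_le (hf i ▸ hlen))⟩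
    · exact exists_eq_of_infix_flatMap hf hs hg hr hlen h

theorem length_le_length_flatMap {f : ι → List α} :
    ∀ {L : List ι}, (∀ i ∈ L, f i ≠ []) → L.length ≤ (L.flatMap f).length
  | [], _ => le_rfl
  | i :: L, h => by
    have := length_pos_iff.2 (h i mem_cons_self)
    have := length_le_length_flatMap fun j hj => h j (mem_cons_of_mem i hj)
    simp only [flatMap_cons, length_append, length_cons]
    omega

theorem eq_singleton_of_flatMap_eq_replicate {f : ι → List α} {a : α} :
    ∀ {L : List ι}, (∀ i ∈ L, f i ≠ []) → L.flatMap f = replicate L.length a →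
      ∀ i ∈ L, f i = [a]
  | [], _, _ => by simp
  | j :: L, hne, h => by
    have hj := length_pos_iff.2 (hne j mem_cons_self)
    have hL := length_le_length_flatMap fun i hi => hne i (mem_cons_of_mem j hi)
    rw [flatMap_cons, length_cons, replicate_succ, ← singleton_append] at h
    have hlen := congrArg length h
    simp only [length_append, length_singleton, length_replicate] at hlen
    obtain ⟨hfj, hfL⟩ := append_inj h (by simp only [length_cons, length_nil]; omega)
    rintro i (_ | ⟨_, hi⟩)
    · exact hfj
    · exact eq_singleton_of_flatMap_eq_replicate
        (fun i hi => hne i (mem_cons_of_mem j hi)) hfL i hi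

theorem exists_flatMap_eq_of_sublist (f : ι → List α) (s : ι → α) {L S : List ι}
    (hL : L.Nodup) (hS : S <+ L) :
    ∃ (G₀ : List α) (G : ι → List α), (∀ i, G i ≠ []) ∧
      L.flatMap (fun i => f i ++ [s i]) = G₀ ++ S.flatMap (fun i => f i ++ G i) := by
  classical
  induction hS with
  | slnil => exact ⟨[], fun i => [s i], by simp, by simp⟩
  | cons a _ ih =>
    obtain ⟨G₀, G, hG, h⟩ := ih (nodup_cons.1 hL).2
    exact ⟨f a ++ s a :: G₀, G, hG, by simp [h]⟩
  | @cons_cons S L a hS ih =>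
    obtain ⟨G₀, G, hG, h⟩ := ih (nodup_cons.1 hL).2
    have ha : ∀ i ∈ S, i ≠ a := fun i hi hia => (nodup_cons.1 hL).1 (hia ▸ hS.subset hi)
    refine ⟨[], Function.update G a (s a :: G₀), fun i => ?_, ?_⟩
    · by_cases hi : i = a <;> simp [Function.update, hi, hG]
    · have hrest : S.flatMap (fun i => f i ++ Function.update G a (s a :: G₀) i) =
          S.flatMap (fun i => f i ++ G i) :=
        flatMap_congr fun i hi => by rw [Function.update_of_ne (ha i hi)]
      simp [h, hrest]

theorem Pairwise.sublist_finRange {n : ℕ} {l : List (Fin n)} (h : l.Pairwise (· < ·)) :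
    l <+ finRange n :=
  sublist_of_subperm_of_pairwise (subperm_of_subset h.nodup fun x _ => mem_finRange x) h
    (pairwise_lt_finRange n)

end List

namespace Stmt6

variable {n m κ : ℕ}

def vertexCode (n m κ : ℕ) : List (Letter n m) :=
  (List.finRange n).flatMap fun v => List.replicate (κ - 1) (vtx v) ++ [xSep v.succ]

def edgeCode (edges : Fin m → Fin n × Fin n) : List (Letter n m) :=
  (List.finRange m).flatMap fun e => [vtx (edges e).1, vtx (edges e).2] ++ [ySep e.succ]

def vertexBlocks (κ : ℕ) (b : Bool) : List (Blk κ) :=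
  (List.finRange κ).flatMap fun i =>
    (((List.finRange κ).filter fun j => decide (j ≠ i)).map fun j => Blk.X b i j) ++
      [Blk.A i.succ]

def edgeBlocks (κ : ℕ) (b : Bool) : List (Blk κ) :=
  (pairs κ).flatMap fun p => [Blk.X b p.1 p.2, Blk.X b p.2 p.1, Blk.B p.1 p.2]

theorem target_eq (edges : Fin m → Fin n × Fin n) :
    target n m κ edges =
      (zSep :: xSep 0 :: vertexCode n m κ) ++ (zSep :: ySep 0 :: edgeCode edges) := by
  simp [target, vertexCode, edgeCode]

theorem pattern_eq (b : Bool) :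
    pattern κ b =
      (Blk.Z b :: Blk.A 0 :: vertexBlocks κ b) ++ (Blk.Z (!b) :: Blk.B0 :: edgeBlocks κ (!b)) := by
  simp [pattern, vertexBlocks, edgeBlocks]

theorem mem_pairs {p : Fin κ × Fin κ} : p ∈ pairs κ ↔ p.1 < p.2 := by
  simp only [pairs, List.mem_flatMap, List.mem_map, List.mem_filter, decide_eq_true_eq]
  exact ⟨fun ⟨_, _, _, ⟨_, h⟩, hp⟩ => hp ▸ h,
    fun h => ⟨_, List.mem_finRange _, _, ⟨List.mem_finRange _, h⟩, rfl⟩⟩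

theorem pairwise_pairs : (pairs κ).Pairwise fun p q => toLex p < toLex q := by
  simp only [pairs, List.pairwise_flatMap, List.pairwise_map, List.mem_map, List.mem_filter,
    Prod.Lex.toLex_lt_toLex]
  refine ⟨fun i _ => ((List.pairwise_lt_finRange κ).sublist List.filter_sublist).imp ?_,
    (List.pairwise_lt_finRange κ).imp ?_⟩
  · exact fun h => Or.inr ⟨trivial, h⟩
  · rintro a b h _ ⟨j, -, rfl⟩ _ ⟨j', -, rfl⟩
    exact Or.inl h

theorem length_filter_ne (i : Fin κ) :
    ((List.finRange κ).filter fun j => decide (j ≠ i)).length = κ - 1 := by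
  have h := List.length_erase_of_mem (List.mem_finRange i)
  rw [(List.nodup_finRange κ).erase_eq_filter, List.length_finRange] at h
  rw [← h]
  congr 1
  exact List.filter_congr fun j _ => by simp only [bne, decide_not]; rfl

theorem zSep_not_mem_vertexCode : zSep ∉ xSep 0 :: vertexCode n m κ := by
  simp [vertexCode, xSep, zSep, vtx]

theorem zSep_not_mem_edgeCode (edges : Fin m → Fin n × Fin n) :
    zSep ∉ ySep 0 :: edgeCode edges := by
  simp [edgeCode, ySep, zSep, vtx]

theorem isLeft_of_mem_vertexCode_of_mem_edgeCode {edges : Fin m → Fin n × Fin n}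
    {x : Letter n m} (h₁ : x ∈ xSep 0 :: vertexCode n m κ) (h₂ : x ∈ ySep 0 :: edgeCode edges) :
    x.isLeft := by
  rcases x with _ | _ | _ | _
  · rfl
  all_goals simp [vertexCode, edgeCode, xSep, ySep, vtx] at h₁ h₂

theorem X_mem_vertexBlocks {b : Bool} {i j : Fin κ} (h : i ≠ j) :
    Blk.X b i j ∈ vertexBlocks κ b := by
  simp [vertexBlocks, h.symm]

theorem X_mem_edgeBlocks {b : Bool} {i j : Fin κ} (h : i ≠ j) : Blk.X b i j ∈ edgeBlocks κ b := by
  simp only [edgeBlocks, List.mem_flatMap, List.mem_cons, List.not_mem_nil, or_false]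
  rcases h.lt_or_gt with h | h
  · exact ⟨(i, j), mem_pairs.2 h, by simp⟩
  · exact ⟨(j, i), mem_pairs.2 h, by simp⟩

theorem flatMap_vertexBlocks (σ : Blk κ → List (Letter n m)) (b : Bool) :
    (vertexBlocks κ b).flatMap σ = (List.finRange κ).flatMap fun i =>
      (((List.finRange κ).filter fun j => decide (j ≠ i)).flatMap fun j => σ (Blk.X b i j)) ++
        σ (Blk.A i.succ) := by
  simp [vertexBlocks, List.flatMap_assoc, List.flatMap_map]

theorem flatMap_edgeBlocks (σ : Blk κ → List (Letter n m)) (b : Bool) :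
    (edgeBlocks κ b).flatMap σ = (pairs κ).flatMap fun p =>
      σ (Blk.X b p.1 p.2) ++ σ (Blk.X b p.2 p.1) ++ σ (Blk.B p.1 p.2) := by
  simp [edgeBlocks, List.flatMap_assoc]

section Forward

variable {edges : Fin m → Fin n × Fin n} {σ : Blk κ → List (Letter n m)}

theorem exists_eq_zSep_cons {b : Bool} (hne : σ (Blk.Z b) ≠ [])
    (h : (pattern κ b).flatMap σ = target n m κ edges) : ∃ t, σ (Blk.Z b) = zSep :: t := by
  obtain ⟨a, t, ht⟩ := List.exists_cons_of_ne_nil hne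
  rw [pattern_eq, target_eq] at h
  simp only [List.flatMap_append, List.flatMap_cons, ht, List.cons_append, List.cons.injEq] at h
  exact ⟨t, h.1 ▸ ht⟩

theorem infix_codes_of_solution (hZ : ∀ b, σ (Blk.Z b) ≠ [])
    (h : ∀ b, (pattern κ b).flatMap σ = target n m κ edges) (b : Bool) :
    (vertexBlocks κ b).flatMap σ <:+: xSep 0 :: vertexCode n m κ ∧
      (edgeBlocks κ (!b)).flatMap σ <:+: ySep 0 :: edgeCode edges := by
  obtain ⟨t, ht⟩ := exists_eq_zSep_cons (hZ b) (h b)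
  obtain ⟨t', ht'⟩ := exists_eq_zSep_cons (hZ (!b)) (h (!b))
  have hb := h b
  rw [pattern_eq, target_eq] at hb
  simp only [List.flatMap_append, List.flatMap_cons, ht, ht', List.cons_append,
    List.cons.injEq, true_and] at hb
  obtain ⟨h₁, h₂⟩ := List.eq_and_eq_of_append_cons_eq_append_cons zSep_not_mem_vertexCode
    (zSep_not_mem_edgeCode edges) (u := t ++ σ (Blk.A 0) ++ (vertexBlocks κ b).flatMap σ)
    (v := t' ++ σ Blk.B0 ++ (edgeBlocks κ (!b)).flatMap σ) (by simpa using hb)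
  exact ⟨⟨t ++ σ (Blk.A 0), [], by simp [← h₁]⟩, ⟨t' ++ σ Blk.B0, [], by simp [← h₂]⟩⟩

theorem isLeft_of_mem_X (hZ : ∀ b, σ (Blk.Z b) ≠ [])
    (h : ∀ b, (pattern κ b).flatMap σ = target n m κ edges) {i j : Fin κ} (hij : i ≠ j)
    {x : Letter n m} (hx : x ∈ σ (Blk.X false i j)) : x.isLeft :=
  isLeft_of_mem_vertexCode_of_mem_edgeCode
    ((infix_codes_of_solution hZ h false).1.subset
      (List.mem_flatMap.2 ⟨_, X_mem_vertexBlocks hij, hx⟩))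
    ((infix_codes_of_solution hZ h true).2.subset
      (List.mem_flatMap.2 ⟨_, X_mem_edgeBlocks hij, hx⟩))

theorem exists_X_eq_vtx (hκ : 2 ≤ κ) (hne : ∀ β, σ β ≠ [])
    (h : ∀ b, (pattern κ b).flatMap σ = target n m κ edges) (i : Fin κ) :
    ∃ c, ∀ j ≠ i, σ (Blk.X false i j) = [vtx c] := by
  set J := (List.finRange κ).filter fun j => decide (j ≠ i)
  set W := J.flatMap fun j => σ (Blk.X false i j)
  have hW : W <:+: [] ++ xSep 0 :: vertexCode n m κ := by
    refine ((List.prefix_append W (σ (Blk.A i.succ))).isInfix.trans ?_).trans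
      (infix_codes_of_solution (fun _ => hne _) h false).1
    rw [flatMap_vertexBlocks]
    exact List.infix_of_mem_flatten (List.mem_map.2 ⟨i, List.mem_finRange i, rfl⟩)
  have hWleft : ∀ x ∈ W, x.isLeft := fun x hx => by
    obtain ⟨j, hj, hx⟩ := List.mem_flatMap.1 hx
    exact isLeft_of_mem_X (fun _ => hne _) h (by simpa [J] using hj : j ≠ i).symm hx
  have hWlen : κ - 1 ≤ W.length :=
    length_filter_ne i ▸ List.length_le_length_flatMap fun _ _ => hne _
  have hW' : W <:+: vertexCode n m κ := by
    refine (hW.infix_or_infix_of_not_mem fun hx => by simpa [xSep] using hWleft _ hx).resolve_left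
      fun hnil => ?_
    have := List.length_eq_zero_iff.2 (List.infix_nil.1 hnil)
    omega
  obtain ⟨c, hc⟩ := List.exists_eq_of_infix_flatMap (p := fun x : Letter n m => x.isLeft)
    (f := fun v => List.replicate (κ - 1) (vtx v)) (by simp) (by simp [xSep]) hWleft
    (by omega) hWlen hW'
  refine ⟨c, fun j hj =>
    List.eq_singleton_of_flatMap_eq_replicate (L := J) (fun _ _ => hne _) ?_ j (by simp [J, hj])⟩
  rw [length_filter_ne]
  exact hc

theorem exists_adj_of_solution (hκ : 2 ≤ κ) (hne : ∀ β, σ β ≠ [])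
    (h : ∀ b, (pattern κ b).flatMap σ = target n m κ edges) :
    ∃ c : Fin κ → Fin n, ∀ i j, i < j → ∃ e, edges e = (c i, c j) := by
  choose c hc using exists_X_eq_vtx hκ hne h
  refine ⟨c, fun i j hij => ?_⟩
  have hcode := (infix_codes_of_solution (fun _ => hne _) h true).2
  rw [Bool.not_true, flatMap_edgeBlocks] at hcode
  have hpair : [vtx (c i), vtx (c j)] <:+: [] ++ ySep 0 :: edgeCode edges := by
    refine (List.infix_append [] _ (σ (Blk.B i j))).trans (.trans ?_ hcode)
    rw [List.nil_append, show [vtx (c i), vtx (c j)] = [vtx (c i)] ++ [vtx (c j)] from rfl,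
      ← hc i j hij.ne', ← hc j i hij.ne]
    exact List.infix_of_mem_flatten (List.mem_map.2 ⟨(i, j), mem_pairs.2 hij, rfl⟩)
  obtain ⟨e, he⟩ := List.exists_eq_of_infix_flatMap (p := fun x : Letter n m => x.isLeft)
    (f := fun e => [vtx (edges e).1, vtx (edges e).2]) (fun _ => rfl) (by simp [ySep])
    (by simp [vtx]) two_pos le_rfl
    ((hpair.infix_or_infix_of_not_mem (by simp [vtx, ySep])).resolve_left (by simp))
  exact ⟨e, by simpa [vtx, Prod.ext_iff, eq_comm] using he⟩

end Forward

theorem exists_clique_of_adj {edges : Fin m → Fin n × Fin n}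
    (horder : ∀ j, (edges j).1 < (edges j).2) {c : Fin κ → Fin n}
    (hc : ∀ i j, i < j → ∃ e, edges e = (c i, c j)) :
    ∃ S : Finset (Fin n), S.card = κ ∧
      ∀ u ∈ S, ∀ w ∈ S, u ≠ w → ∃ j : Fin m, edges j = (u, w) ∨ edges j = (w, u) := by
  have hmono : StrictMono c := fun i j hij => by
    obtain ⟨e, he⟩ := hc i j hij
    simpa [he] using horder e
  refine ⟨Finset.univ.map ⟨c, hmono.injective⟩, by simp, ?_⟩
  simp only [Finset.mem_map, Finset.mem_univ, true_and, Function.Embedding.coeFn_mk]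
  rintro _ ⟨i, rfl⟩ _ ⟨j, rfl⟩ hij
  rcases lt_or_gt_of_ne (hmono.injective.ne_iff.1 hij) with h | h
  · exact (hc i j h).imp fun _ => Or.inl
  · exact (hc j i h).imp fun _ => Or.inr

section Backward

variable {edges : Fin m → Fin n × Fin n}

theorem exists_strictMono_of_clique (horder : ∀ j, (edges j).1 < (edges j).2)
    {S : Finset (Fin n)} (hcard : S.card = κ)
    (hS : ∀ u ∈ S, ∀ w ∈ S, u ≠ w → ∃ j : Fin m, edges j = (u, w) ∨ edges j = (w, u)) :
    ∃ u : Fin κ → Fin n, StrictMono u ∧ ∀ i j, i < j → ∃ e, edges e = (u i, u j) := by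
  set u := S.orderEmbOfFin hcard
  refine ⟨u, u.strictMono, fun i j hij => ?_⟩
  obtain ⟨e, he | he⟩ := hS _ (S.orderEmbOfFin_mem hcard i) _ (S.orderEmbOfFin_mem hcard j)
    (u.strictMono hij).ne
  · exact ⟨e, he⟩
  · have := horder e
    rw [he] at this
    exact absurd (u.strictMono hij) this.not_gt

theorem exists_sorted_edgeIndex (hκ : 2 ≤ κ) (hsorted : StrictMono fun e => toLex (edges e))
    {u : Fin κ → Fin n} (hu : StrictMono u) (hadj : ∀ i j, i < j → ∃ e, edges e = (u i, u j)) :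
    ∃ E : Fin κ × Fin κ → Fin m, (∀ p ∈ pairs κ, edges (E p) = (u p.1, u p.2)) ∧
      ((pairs κ).map E).Pairwise (· < ·) := by
  obtain ⟨e₀, -⟩ := hadj ⟨0, by omega⟩ ⟨1, by omega⟩ (by simp [Fin.lt_def])
  have : Nonempty (Fin m) := ⟨e₀⟩
  choose! E hE using fun p (hp : p ∈ pairs κ) => hadj p.1 p.2 (mem_pairs.1 hp)
  refine ⟨E, hE, List.pairwise_map.2 (pairwise_pairs.imp_of_mem fun hp hq hpq => ?_)⟩
  rw [← hsorted.lt_iff_lt]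
  simp only [hE _ hp, hE _ hq, Prod.Lex.toLex_lt_toLex] at hpq ⊢
  exact hpq.imp (hu ·) fun h => ⟨congrArg u h.1, hu h.2⟩

theorem exists_solution_of_sorted_edgeIndex {u : Fin κ → Fin n} (hu : StrictMono u)
    {E : Fin κ × Fin κ → Fin m} (hE : ∀ p ∈ pairs κ, edges (E p) = (u p.1, u p.2))
    (hEsorted : ((pairs κ).map E).Pairwise (· < ·)) :
    ∃ σ : Blk κ → List (Letter n m),
      (∀ β, σ β ≠ []) ∧ ∀ b, (pattern κ b).flatMap σ = target n m κ edges := by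
  obtain ⟨G₀, G, hG, hV⟩ := List.exists_flatMap_eq_of_sublist
    (fun v => List.replicate (κ - 1) (vtx v)) (fun v : Fin n => xSep v.succ)
    (List.nodup_finRange n)
    (List.pairwise_map.2 ((List.pairwise_lt_finRange κ).imp (hu ·))).sublist_finRange
  obtain ⟨H₀, H, hH, hEd⟩ := List.exists_flatMap_eq_of_sublist
    (fun e => [vtx (edges e).1, vtx (edges e).2]) (fun e : Fin m => ySep e.succ)
    (List.nodup_finRange m) hEsorted.sublist_finRange
  let σ : Blk κ → List (Letter n m)
    | .Z _ => [zSep]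
    | .X _ i _ => [vtx (u i)]
    | .A t => Fin.cases (xSep 0 :: G₀) (fun i => G (u i)) t
    | .B0 => ySep 0 :: H₀
    | .B i j => H (E (i, j))
  refine ⟨σ, ?_, fun b => ?_⟩
  · rintro (_ | _ | t | _ | _)
    · simp [σ]
    · simp [σ]
    · cases t using Fin.cases <;> simp [σ, hG]
    · simp [σ]
    · exact hH _
  · rw [pattern_eq, target_eq, vertexCode, edgeCode, hV, hEd]
    simp only [List.flatMap_append, List.flatMap_cons, flatMap_vertexBlocks, flatMap_edgeBlocks,
      List.flatMap_map]
    have hrow : ∀ i, (((List.finRange κ).filter fun j => decide (j ≠ i)).flatMap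
        fun j => σ (Blk.X b i j)) = List.replicate (κ - 1) (vtx (u i)) := fun i => by
      rw [← length_filter_ne i, ← List.map_const', List.map_eq_flatMap]
    have hcol : ((pairs κ).flatMap fun p =>
        σ (Blk.X (!b) p.1 p.2) ++ σ (Blk.X (!b) p.2 p.1) ++ σ (Blk.B p.1 p.2)) =
        (pairs κ).flatMap fun p => [vtx (edges (E p)).1, vtx (edges (E p)).2] ++ H (E p) :=
      List.flatMap_congr fun p hp => by simp [σ, hE p hp]
    simp only [hrow, hcol]
    simp [σ]

end Backward

/-- **correctness of the reduction in Theorem 4.2.** Let `κ ≥ 2` and let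
`G` be a graph on `{v₀, …, v_{n-1}}` whose edge list `e₀, …, e_{m-1}` (each edge an
ordered pair, smaller endpoint first) is sorted lexicographically. The system of the
two duplicate-free equations `T ≡ 𝒳`, `T ≡ 𝒳'` (same target) is satisfied by some
assignment of nonempty strings to the blocks iff `G` has a clique of size `κ`. -/
theorem stmt_6 (n m κ : ℕ) (hκ : 2 ≤ κ)
    (edges : Fin m → Fin n × Fin n)
    (horder : ∀ j, (edges j).1 < (edges j).2)
    (hsorted : ∀ j j' : Fin m, j < j' →
      (edges j).1 < (edges j').1 ∨
        ((edges j).1 = (edges j').1 ∧ (edges j).2 < (edges j').2)) :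
    (∃ σ : Blk κ → List (Letter n m),
        (∀ b, σ b ≠ []) ∧
        (pattern κ false).flatMap σ = target n m κ edges ∧
        (pattern κ true).flatMap σ = target n m κ edges) ↔
    (∃ S : Finset (Fin n), S.card = κ ∧
        ∀ u ∈ S, ∀ w ∈ S, u ≠ w →
          ∃ j : Fin m, edges j = (u, w) ∨ edges j = (w, u)) := by
  constructor
  · rintro ⟨σ, hne, h₀, h₁⟩
    obtain ⟨c, hc⟩ := exists_adj_of_solution hκ hne (Bool.forall_bool.2 ⟨h₀, h₁⟩)
    exact exists_clique_of_adj horder hc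
  · rintro ⟨S, hcard, hS⟩
    obtain ⟨u, hu, hadj⟩ := exists_strictMono_of_clique horder hcard hS
    obtain ⟨E, hE, hEsorted⟩ := exists_sorted_edgeIndex hκ
      (fun j j' h => Prod.Lex.toLex_lt_toLex.2 (hsorted j j' h)) hu hadj
    obtain ⟨σ, hne, h⟩ := exists_solution_of_sorted_edgeIndex hu hE hEsorted
    exact ⟨σ, hne, h false, h true⟩

end Stmt6
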